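/- arXiv:2004.01303 — 2 statements merged into one kernel-verified Lean document; each statement's English description precedes it below -/
import Mathlib

section
/- Assume that max{Re λ : λ ∈ σ(B)} ≥ 0, where σ(B) is the set of complex eigenvalues of B. Then there exists a constant c₀ > 0 such that V(t) ≥ c₀·√t for all t ≥ 1, where V(t) = ω_N · det(tK(t))^{1/2}. -/
/-!
Let `μ` be an eigenvalue of `B` with `Re μ ≥ 0` and `v` an eigenvector of `Bᵀ` for it. Since
`e^{sBᵀ} v = e^{sμ} v`, the Hermitian form of `tK(t) = ∫₀ᵗ e^{sB} Q e^{sBᵀ} ds` at `v` equals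
`(∫₀ᵗ e^{2s Re μ} ds) · v*Qv ≥ t · v*Qv`, and `v*Qv > 0` because `tK(1)` is positive definite.
So the largest eigenvalue of `tK(t)` grows at least linearly in `t`, while `tK(t) ≥ tK(1) ≥ ε`
in the Loewner order bounds all other eigenvalues below by `ε > 0`. Hence `det tK(t) ≥ c t`,
and `V(t) = ω_N √(det tK(t)) ≥ c₀ √t`.
-/

open MeasureTheory Filter Matrix Real
open scoped Topology ENNReal NNReal

noncomputable section

/-- The matrix `t·K(t) = ∫₀ᵗ e^{sB} Q e^{sBᵀ} ds`, defined entrywise. -/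
def tK {N : ℕ} (Q B : Matrix (Fin N) (Fin N) ℝ) (t : ℝ) : Matrix (Fin N) (Fin N) ℝ :=
  Matrix.of fun i j =>
    ∫ s in (0:ℝ)..t, (NormedSpace.exp (s • B) * Q * NormedSpace.exp (s • Bᵀ)) i j

/-- The covariance matrix `K(t) = (1/t)∫₀ᵗ e^{sB} Q e^{sBᵀ} ds`. -/
def Kmat {N : ℕ} (Q B : Matrix (Fin N) (Fin N) ℝ) (t : ℝ) : Matrix (Fin N) (Fin N) ℝ :=
  t⁻¹ • tK Q B t

/-- The Hörmander hypoellipticity condition: `K(t) > 0` for every `t > 0`. -/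
def Hormander {N : ℕ} (Q B : Matrix (Fin N) (Fin N) ℝ) : Prop :=
  ∀ t > 0, (Kmat Q B t).PosDef

/-- The Hörmander heat kernel
`p(X,Y,t) = (4π)^{-N/2} det(tK(t))^{-1/2} exp(-(1/(4t))⟨K(t)⁻¹(Y-e^{tB}X), Y-e^{tB}X⟩)`. -/
def hormKernel {N : ℕ} (Q B : Matrix (Fin N) (Fin N) ℝ) (X Y : Fin N → ℝ) (t : ℝ) : ℝ :=
  (4 * π) ^ (-(N : ℝ) / 2) * ((tK Q B t).det) ^ (-(1:ℝ)/2) *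
    Real.exp (-(1 / (4 * t)) *
      ((Kmat Q B t)⁻¹.mulVec (Y - (NormedSpace.exp (t • B)).mulVec X) ⬝ᵥ
        (Y - (NormedSpace.exp (t • B)).mulVec X)))

/-- `∫_S t^{-sp/2-1} ∫∫ p(X,Y,t)|f(Y)-f(X)|^p`, i.e. the `p`-th power of the part of the
Besov seminorm where the time variable ranges in `S`. -/
def besovEnergyOn {N : ℕ} (Q B : Matrix (Fin N) (Fin N) ℝ) (s p : ℝ)
    (f : (Fin N → ℝ) → ℝ) (S : Set ℝ) : ℝ≥0∞ :=
  ∫⁻ t in S, ∫⁻ X, ∫⁻ Y,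
    ENNReal.ofReal (t ^ (-(s * p) / 2 - 1) * hormKernel Q B X Y t * |f Y - f X| ^ p)

/-- `N_{s,p}(f)^p`, the `p`-th power of the Besov seminorm. -/
def besovEnergy {N : ℕ} (Q B : Matrix (Fin N) (Fin N) ℝ) (s p : ℝ)
    (f : (Fin N → ℝ) → ℝ) : ℝ≥0∞ := besovEnergyOn Q B s p f (Set.Ioi 0)

/-- Membership in the Besov space `𝔅_{s,p}`: `f ∈ Lᵖ` and `N_{s,p}(f) < ∞`. -/
def MemBesov {N : ℕ} (Q B : Matrix (Fin N) (Fin N) ℝ) (s p : ℝ)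
    (f : (Fin N → ℝ) → ℝ) : Prop :=
  MemLp f (ENNReal.ofReal p) volume ∧ besovEnergy Q B s p f < ⊤

/-- The `Lᵖ` norm `‖f‖_{Lᵖ}` (as a real number). -/
def lpNorm {N : ℕ} (p : ℝ) (f : (Fin N → ℝ) → ℝ) : ℝ :=
  (eLpNorm f (ENNReal.ofReal p) volume).toReal

/-- The Hörmander semigroup `P_t f(X) = ∫ p(X,Y,t) f(Y) dY`. -/
def Pt {N : ℕ} (Q B : Matrix (Fin N) (Fin N) ℝ) (f : (Fin N → ℝ) → ℝ)
    (X : Fin N → ℝ) (t : ℝ) : ℝ := ∫ Y, hormKernel Q B X Y t * f Y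

/-- The fractional power `(-𝒜)^s f(X) = -(s/Γ(1-s)) ∫₀^∞ t^{-1-s}(P_t f(X) - f(X)) dt`. -/
def fracPow {N : ℕ} (Q B : Matrix (Fin N) (Fin N) ℝ) (s : ℝ) (f : (Fin N → ℝ) → ℝ)
    (X : Fin N → ℝ) : ℝ :=
  -(s / Real.Gamma (1 - s)) * ∫ t in Set.Ioi (0:ℝ), t ^ (-1 - s) * (Pt Q B f X t - f X)

/-- The operator norm `‖M‖ = sup_{|X|=1} |MX|` of a matrix acting on Euclidean space. -/
def opNorm {N : ℕ} (M : Matrix (Fin N) (Fin N) ℝ) : ℝ :=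
  ‖(Matrix.toEuclideanCLM (𝕜 := ℝ) M : EuclideanSpace ℝ (Fin N) →L[ℝ] EuclideanSpace ℝ (Fin N))‖

/-- The volume function `V(t) = ω_N det(tK(t))^{1/2}`. -/
def volFun {N : ℕ} (Q B : Matrix (Fin N) (Fin N) ℝ) (t : ℝ) : ℝ :=
  (volume (Metric.ball (0 : EuclideanSpace ℝ (Fin N)) 1)).toReal * Real.sqrt ((tK Q B t).det)

/-- `K_∞ = ∫₀^∞ e^{sB} Q e^{sBᵀ} ds`, defined entrywise. -/
def Kinf {N : ℕ} (Q B : Matrix (Fin N) (Fin N) ℝ) : Matrix (Fin N) (Fin N) ℝ :=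
  Matrix.of fun i j =>
    ∫ s in Set.Ioi (0:ℝ), (NormedSpace.exp (s • B) * Q * NormedSpace.exp (s • Bᵀ)) i j

open scoped MatrixOrder

namespace Matrix

variable {n : Type*} [Fintype n]

section LoewnerOrder

variable [DecidableEq n]

lemma PosDef.exists_smul_one_le {A : Matrix n n ℝ} (hA : A.PosDef) :
    ∃ ε : ℝ, 0 < ε ∧ ε • (1 : Matrix n n ℝ) ≤ A := by
  obtain ⟨ε, hε, hle⟩ : ∃ ε : ℝ, 0 < ε ∧ ∀ i, ε ≤ hA.1.eigenvalues i := by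
    rcases isEmpty_or_nonempty n with hn | hn
    · exact ⟨1, one_pos, fun i => isEmptyElim i⟩
    · obtain ⟨i₀, hi₀⟩ := Finite.exists_min hA.1.eigenvalues
      exact ⟨_, hA.eigenvalues_pos i₀, hi₀⟩
  refine ⟨ε, hε, ?_⟩
  rw [← Algebra.algebraMap_eq_smul_one, algebraMap_le_iff_le_spectrum hA.1.isSelfAdjoint,
    hA.1.spectrum_real_eq_range_eigenvalues]
  rintro _ ⟨i, rfl⟩
  exact hle i

lemma dotProduct_mulVec_le_of_le_smul_one {M : Matrix n n ℝ} {r : ℝ}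
    (h : M ≤ r • (1 : Matrix n n ℝ)) (x : n → ℝ) : x ⬝ᵥ M *ᵥ x ≤ r * (x ⬝ᵥ x) := by
  have := (le_iff.mp h).dotProduct_mulVec_nonneg x
  simp only [star_trivial, sub_mulVec, smul_mulVec, one_mulVec, dotProduct_sub,
    dotProduct_smul, smul_eq_mul] at this
  linarith

/-- `det M` is the largest eigenvalue `λ` of `M`, which bounds `x ⬝ M x / |x|²`, times the
others, each `≥ ε`. -/
lemma pow_mul_dotProduct_mulVec_le_det_mul {M : Matrix n n ℝ} {ε : ℝ} (hε : 0 ≤ ε)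
    (hεM : ε • (1 : Matrix n n ℝ) ≤ M) (x : n → ℝ) :
    ε ^ (Fintype.card n - 1) * (x ⬝ᵥ M *ᵥ x) ≤ M.det * (x ⬝ᵥ x) := by
  rcases isEmpty_or_nonempty n with hn | hn
  · simp [dotProduct]
  have hM : M.IsHermitian :=
    (nonneg_iff_posSemidef.mp ((smul_nonneg hε zero_le_one).trans hεM)).1
  have hspec := hM.spectrum_real_eq_range_eigenvalues
  have hlow : ∀ i, ε ≤ hM.eigenvalues i := by
    rw [← Algebra.algebraMap_eq_smul_one, algebraMap_le_iff_le_spectrum hM.isSelfAdjoint,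
      hspec] at hεM
    exact fun i => hεM _ ⟨i, rfl⟩
  obtain ⟨imax, himax⟩ := Finite.exists_max hM.eigenvalues
  have hup : M ≤ hM.eigenvalues imax • (1 : Matrix n n ℝ) := by
    rw [← Algebra.algebraMap_eq_smul_one, le_algebraMap_iff_spectrum_le hM.isSelfAdjoint, hspec]
    rintro _ ⟨i, rfl⟩
    exact himax i
  have hdet : hM.eigenvalues imax * ε ^ (Fintype.card n - 1) ≤ M.det := by
    rw [show M.det = ∏ i, hM.eigenvalues i by simpa using hM.det_eq_prod_eigenvalues,
      ← Finset.mul_prod_erase _ _ (Finset.mem_univ imax)]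
    gcongr
    · exact hε.trans (hlow imax)
    · calc ε ^ (Fintype.card n - 1) = ∏ _ ∈ Finset.univ.erase imax, ε := by
            simp [Finset.card_erase_of_mem]
        _ ≤ _ := Finset.prod_le_prod (fun _ _ => hε) fun i _ => hlow i
  calc ε ^ (Fintype.card n - 1) * (x ⬝ᵥ M *ᵥ x)
      ≤ ε ^ (Fintype.card n - 1) * (hM.eigenvalues imax * (x ⬝ᵥ x)) := by
        gcongr; exact dotProduct_mulVec_le_of_le_smul_one hup x
    _ ≤ M.det * (x ⬝ᵥ x) := by
        rw [← mul_assoc, mul_comm (ε ^ _)]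
        exact mul_le_mul_of_nonneg_right hdet (Fintype.sum_nonneg fun i => mul_self_nonneg (x i))

end LoewnerOrder

lemma exists_transpose_mulVec_eq_smul_of_mem_spectrum [DecidableEq n] {K : Type*} [Field K]
    {A : Matrix n n K} {μ : K} (hμ : μ ∈ spectrum K A) : ∃ v ≠ 0, Aᵀ *ᵥ v = μ • v := by
  rw [mem_spectrum_iff_isRoot_charpoly, ← charpoly_transpose, ← mem_spectrum_iff_isRoot_charpoly,
    ← spectrum_toLin', ← Module.End.hasEigenvalue_iff_mem_spectrum] at hμ
  obtain ⟨v, hv⟩ := hμ.exists_hasEigenvector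
  exact ⟨v, hv.2, by simpa using hv.apply_eq_smul⟩

section Exponential

variable [DecidableEq n]

attribute [local instance] Matrix.linftyOpNormedRing Matrix.linftyOpNormedAlgebra

lemma exp_mulVec_of_mulVec_eq_smul {𝕂 : Type*} [RCLike 𝕂] {A : Matrix n n 𝕂} {v : n → 𝕂}
    {μ : 𝕂} (hv : A *ᵥ v = μ • v) : NormedSpace.exp A *ᵥ v = NormedSpace.exp μ • v := by
  have hpow (k : ℕ) : A ^ k *ᵥ v = μ ^ k • v := by
    induction k with
    | zero => simp
    | succ k ih => rw [pow_succ', ← mulVec_mulVec, ih, mulVec_smul, hv, smul_smul, pow_succ]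
  let L : Matrix n n 𝕂 →L[𝕂] (n → 𝕂) :=
    LinearMap.toContinuousLinearMap ((mulVecBilin 𝕂 𝕂).flip v)
  have hA := (NormedSpace.exp_series_hasSum_exp' (𝕂 := 𝕂) A).mapL L
  have hμ := (NormedSpace.exp_series_hasSum_exp' (𝕂 := 𝕂) μ).smul_const v
  refine hA.unique ?_
  simpa [L, smul_mulVec, hpow, smul_smul] using hμ

lemma map_ofReal_exp (M : Matrix n n ℝ) :
    (NormedSpace.exp M).map Complex.ofReal = NormedSpace.exp (M.map Complex.ofReal) :=
  NormedSpace.map_exp (Complex.ofRealHom.mapMatrix (m := n))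
    (continuous_id.matrix_map Complex.continuous_ofReal) M

end Exponential

def complexQuadForm (M : Matrix n n ℝ) (w : n → ℂ) : ℝ :=
  (star w ⬝ᵥ M.map Complex.ofReal *ᵥ w).re

lemma complexQuadForm_eq (M : Matrix n n ℝ) (w : n → ℂ) :
    complexQuadForm M w =
      (Complex.re ∘ w) ⬝ᵥ M *ᵥ (Complex.re ∘ w) + (Complex.im ∘ w) ⬝ᵥ M *ᵥ (Complex.im ∘ w) := by
  simp only [complexQuadForm, dotProduct, mulVec, Pi.star_apply, map_apply, Function.comp_apply,
    Complex.re_sum, Finset.mul_sum, ← Finset.sum_add_distrib]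
  refine Finset.sum_congr rfl fun i _ => Finset.sum_congr rfl fun j _ => ?_
  simp [Complex.mul_re, Complex.mul_im]

lemma complexQuadForm_smul (M : Matrix n n ℝ) (c : ℂ) (w : n → ℂ) :
    complexQuadForm M (c • w) = Complex.normSq c * complexQuadForm M w := by
  rw [complexQuadForm, complexQuadForm, star_smul, mulVec_smul, smul_dotProduct, dotProduct_smul,
    smul_smul, smul_eq_mul, ← Complex.re_ofReal_mul, Complex.normSq_eq_conj_mul_self]
  rfl

lemma complexQuadForm_nonneg {M : Matrix n n ℝ} (hM : M.PosSemidef) (w : n → ℂ) :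
    0 ≤ complexQuadForm M w := by
  rw [complexQuadForm_eq]
  have hre := hM.dotProduct_mulVec_nonneg (Complex.re ∘ w)
  have him := hM.dotProduct_mulVec_nonneg (Complex.im ∘ w)
  simp only [star_trivial] at hre him
  positivity

lemma PosDef.complexQuadForm_pos {M : Matrix n n ℝ} (hM : M.PosDef) {w : n → ℂ} (hw : w ≠ 0) :
    0 < complexQuadForm M w := by
  rw [complexQuadForm_eq]
  have hre := hM.posSemidef.dotProduct_mulVec_nonneg (Complex.re ∘ w)
  have him := hM.posSemidef.dotProduct_mulVec_nonneg (Complex.im ∘ w)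
  simp only [star_trivial] at hre him
  obtain h | h : Complex.re ∘ w ≠ 0 ∨ Complex.im ∘ w ≠ 0 := by
    by_contra! h
    exact hw (funext fun i => Complex.ext (congrFun h.1 i) (congrFun h.2 i))
  all_goals
    have := hM.dotProduct_mulVec_pos h
    simp only [star_trivial] at this
    linarith

lemma complexQuadForm_map_ofReal_mulVec (M A : Matrix n n ℝ) (w : n → ℂ) :
    complexQuadForm M (A.map Complex.ofReal *ᵥ w) =
      (A *ᵥ (Complex.re ∘ w)) ⬝ᵥ M *ᵥ (A *ᵥ (Complex.re ∘ w)) +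
        (A *ᵥ (Complex.im ∘ w)) ⬝ᵥ M *ᵥ (A *ᵥ (Complex.im ∘ w)) := by
  have hre : Complex.re ∘ (A.map Complex.ofReal *ᵥ w) = A *ᵥ (Complex.re ∘ w) := by
    ext i; simp [mulVec, dotProduct, Complex.re_sum]
  have him : Complex.im ∘ (A.map Complex.ofReal *ᵥ w) = A *ᵥ (Complex.im ∘ w) := by
    ext i; simp [mulVec, dotProduct, Complex.im_sum]
  rw [complexQuadForm_eq, hre, him]

lemma pow_mul_complexQuadForm_le_det_mul [DecidableEq n] {M : Matrix n n ℝ} {ε : ℝ}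
    (hε : 0 ≤ ε) (hεM : ε • (1 : Matrix n n ℝ) ≤ M) (w : n → ℂ) :
    ε ^ (Fintype.card n - 1) * complexQuadForm M w ≤ M.det * complexQuadForm 1 w := by
  simp only [complexQuadForm_eq, one_mulVec, mul_add]
  exact add_le_add (pow_mul_dotProduct_mulVec_le_det_mul hε hεM _)
    (pow_mul_dotProduct_mulVec_le_det_mul hε hεM _)

lemma dotProduct_intervalIntegral_mulVec {F : ℝ → Matrix n n ℝ} (hF : Continuous F)
    (a b : ℝ) (x : n → ℝ) :
    x ⬝ᵥ (of fun i j => ∫ s in a..b, F s i j) *ᵥ x = ∫ s in a..b, x ⬝ᵥ F s *ᵥ x := by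
  have hent (i j : n) : Continuous fun s => F s i j := hF.matrix_elem i j
  simp only [dotProduct, mulVec, of_apply, Finset.mul_sum]
  rw [intervalIntegral.integral_finsetSum fun i _ =>
    (by fun_prop : Continuous _).intervalIntegrable _ _]
  refine Finset.sum_congr rfl fun i _ => ?_
  rw [intervalIntegral.integral_finsetSum fun j _ =>
    (by fun_prop : Continuous _).intervalIntegrable _ _]
  refine Finset.sum_congr rfl fun j _ => ?_
  rw [intervalIntegral.integral_const_mul, intervalIntegral.integral_mul_const]

lemma complexQuadForm_intervalIntegral {F : ℝ → Matrix n n ℝ} (hF : Continuous F)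
    (a b : ℝ) (w : n → ℂ) :
    complexQuadForm (of fun i j => ∫ s in a..b, F s i j) w =
      ∫ s in a..b, complexQuadForm (F s) w := by
  have hcont (x : n → ℝ) : Continuous fun s => x ⬝ᵥ F s *ᵥ x := by
    simp only [dotProduct, mulVec]; fun_prop
  simp only [complexQuadForm_eq, dotProduct_intervalIntegral_mulVec hF]
  rw [intervalIntegral.integral_add ((hcont _).intervalIntegrable _ _)
    ((hcont _).intervalIntegrable _ _)]

end Matrix

lemma Hormander.posDef_tK {N : ℕ} {Q B : Matrix (Fin N) (Fin N) ℝ} (hH : Hormander Q B) {t : ℝ}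
    (ht : 0 < t) : (tK Q B t).PosDef := by
  have := (hH t ht).smul ht
  rwa [Kmat, smul_smul, mul_inv_cancel₀ ht.ne', one_smul] at this

section Covariance

variable {N : ℕ} (Q B : Matrix (Fin N) (Fin N) ℝ)

def covIntegrand (s : ℝ) : Matrix (Fin N) (Fin N) ℝ :=
  NormedSpace.exp (s • B) * Q * NormedSpace.exp (s • Bᵀ)

lemma tK_eq_integral (t : ℝ) :
    tK Q B t = of fun i j => ∫ s in (0:ℝ)..t, covIntegrand Q B s i j :=
  rfl

section Continuity

attribute [local instance] Matrix.linftyOpNormedRing Matrix.linftyOpNormedAlgebra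

lemma continuous_covIntegrand : Continuous (covIntegrand Q B) := by
  have hexp (A : Matrix (Fin N) (Fin N) ℝ) : Continuous fun s : ℝ => NormedSpace.exp (s • A) :=
    NormedSpace.exp_continuous.comp (continuous_id.smul continuous_const)
  exact ((hexp B).matrix_mul continuous_const).matrix_mul (hexp Bᵀ)

end Continuity

lemma dotProduct_covIntegrand_mulVec (s : ℝ) (x : Fin N → ℝ) :
    x ⬝ᵥ covIntegrand Q B s *ᵥ x =
      (NormedSpace.exp (s • Bᵀ) *ᵥ x) ⬝ᵥ Q *ᵥ (NormedSpace.exp (s • Bᵀ) *ᵥ x) := by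
  rw [covIntegrand, ← mulVec_mulVec, ← mulVec_mulVec, dotProduct_mulVec, ← mulVec_transpose,
    ← exp_transpose, transpose_smul]

lemma isHermitian_tK (hQ : Q.IsHermitian) (t : ℝ) : (tK Q B t).IsHermitian := by
  have hsymm (s : ℝ) : (covIntegrand Q B s)ᵀ = covIntegrand Q B s := by
    rw [covIntegrand, transpose_mul, transpose_mul, ← exp_transpose, ← exp_transpose,
      transpose_smul, transpose_smul, transpose_transpose,
      ← conjTranspose_eq_transpose_of_trivial, hQ, mul_assoc]
  ext i j
  simp only [conjTranspose_apply, star_trivial, tK_eq_integral, of_apply]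
  exact intervalIntegral.integral_congr fun s _ => congrFun (congrFun (hsymm s) i) j

lemma tK_mono (hQ : Q.PosSemidef) {t₁ t₂ : ℝ} (h : t₁ ≤ t₂) : tK Q B t₁ ≤ tK Q B t₂ := by
  refine le_iff.mpr <| .of_dotProduct_mulVec_nonneg
    ((isHermitian_tK Q B hQ.1 t₂).sub (isHermitian_tK Q B hQ.1 t₁)) fun x => ?_
  have hint (a b : ℝ) : IntervalIntegrable (fun s => x ⬝ᵥ covIntegrand Q B s *ᵥ x) volume a b :=
    (continuous_const.dotProduct
      ((continuous_covIntegrand Q B).matrix_mulVec continuous_const)).intervalIntegrable a b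
  rw [star_trivial, sub_mulVec, dotProduct_sub, tK_eq_integral, tK_eq_integral,
    dotProduct_intervalIntegral_mulVec (continuous_covIntegrand Q B),
    dotProduct_intervalIntegral_mulVec (continuous_covIntegrand Q B),
    intervalIntegral.integral_interval_sub_left (hint _ _) (hint _ _)]
  refine intervalIntegral.integral_nonneg h fun s _ => ?_
  rw [dotProduct_covIntegrand_mulVec]
  simpa only [star_trivial] using hQ.dotProduct_mulVec_nonneg _

section Eigenvector

variable {Q B} {μ : ℂ} {v : Fin N → ℂ} (hv : (B.map Complex.ofReal)ᵀ *ᵥ v = μ • v)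
include hv

lemma complexQuadForm_covIntegrand (s : ℝ) :
    complexQuadForm (covIntegrand Q B s) v = Real.exp (2 * s * μ.re) * complexQuadForm Q v := by
  have hexp : (NormedSpace.exp (s • Bᵀ)).map Complex.ofReal *ᵥ v = Complex.exp (s * μ) • v := by
    rw [map_ofReal_exp, Complex.exp_eq_exp_ℂ]
    apply exp_mulVec_of_mulVec_eq_smul
    rw [show (s • Bᵀ).map Complex.ofReal = (s : ℂ) • (B.map Complex.ofReal)ᵀ by ext; simp,
      smul_mulVec, hv, smul_smul]
  rw [complexQuadForm_eq, dotProduct_covIntegrand_mulVec, dotProduct_covIntegrand_mulVec,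
    ← complexQuadForm_map_ofReal_mulVec, hexp, complexQuadForm_smul, Complex.normSq_eq_norm_sq,
    Complex.norm_exp, Complex.re_ofReal_mul, ← Real.exp_nat_mul]
  push_cast
  ring_nf

lemma complexQuadForm_tK (t : ℝ) :
    complexQuadForm (tK Q B t) v =
      ∫ s in (0:ℝ)..t, Real.exp (2 * s * μ.re) * complexQuadForm Q v := by
  rw [tK_eq_integral, complexQuadForm_intervalIntegral (continuous_covIntegrand Q B)]
  simp only [complexQuadForm_covIntegrand hv]

lemma complexQuadForm_pos_of_hormander (hH : Hormander Q B) (hv0 : v ≠ 0) :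
    0 < complexQuadForm Q v := by
  have h := (hH.posDef_tK one_pos).complexQuadForm_pos hv0
  rw [complexQuadForm_tK hv, intervalIntegral.integral_mul_const] at h
  exact pos_of_mul_pos_right h
    (intervalIntegral.integral_nonneg zero_le_one fun s _ => (Real.exp_pos _).le)

lemma mul_le_complexQuadForm_tK (hQ : Q.PosSemidef) (hμ : 0 ≤ μ.re) {t : ℝ} (ht : 0 ≤ t) :
    t * complexQuadForm Q v ≤ complexQuadForm (tK Q B t) v := by
  have hq := complexQuadForm_nonneg hQ v
  calc t * complexQuadForm Q v = ∫ _ in (0:ℝ)..t, complexQuadForm Q v := by simp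
    _ ≤ _ := by
      rw [complexQuadForm_tK hv]
      refine intervalIntegral.integral_mono_on ht intervalIntegrable_const
        (Continuous.intervalIntegrable (by fun_prop) _ _) fun s hs => ?_
      exact le_mul_of_one_le_left hq (Real.one_le_exp (by nlinarith [hs.1]))

end Eigenvector

theorem exists_mul_le_det_tK (hQ : Q.PosSemidef) (hH : Hormander Q B) {μ : ℂ}
    (hμ : μ ∈ spectrum ℂ (B.map Complex.ofReal)) (hμre : 0 ≤ μ.re) :
    ∃ c > 0, ∀ t ≥ 1, c * t ≤ (tK Q B t).det := by
  obtain ⟨v, hv0, hv⟩ := exists_transpose_mulVec_eq_smul_of_mem_spectrum hμ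
  obtain ⟨ε, hε, hεK⟩ := (hH.posDef_tK one_pos).exists_smul_one_le
  have hq := complexQuadForm_pos_of_hormander hv hH hv0
  have hnorm := PosDef.one.complexQuadForm_pos hv0
  refine ⟨ε ^ (N - 1) * complexQuadForm Q v / complexQuadForm 1 v, by positivity, fun t ht => ?_⟩
  have hdet := pow_mul_complexQuadForm_le_det_mul hε.le (hεK.trans (tK_mono Q B hQ ht)) v
  rw [Fintype.card_fin] at hdet
  rw [div_mul_eq_mul_div, div_le_iff₀ hnorm]
  calc ε ^ (N - 1) * complexQuadForm Q v * t = ε ^ (N - 1) * (t * complexQuadForm Q v) := by ring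
    _ ≤ ε ^ (N - 1) * complexQuadForm (tK Q B t) v := by
        gcongr; exact mul_le_complexQuadForm_tK hv hQ hμre (by linarith)
    _ ≤ _ := hdet

end Covariance

theorem statement1_general {N : ℕ} (Q B : Matrix (Fin N) (Fin N) ℝ)
    (hQ : Q.PosSemidef) (hH : Hormander Q B)
    (hmax : ∃ μ ∈ spectrum ℂ (B.map (Complex.ofReal : ℝ → ℂ)), (0:ℝ) ≤ μ.re) :
    ∃ c₀ > (0:ℝ), ∀ t ≥ (1:ℝ), c₀ * Real.sqrt t ≤ volFun Q B t := by
  obtain ⟨μ, hμ, hμre⟩ := hmax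
  obtain ⟨c, hc, hdet⟩ := exists_mul_le_det_tK Q B hQ hH hμ hμre
  set ω := (volume (Metric.ball (0 : EuclideanSpace ℝ (Fin N)) 1)).toReal
  have hω : 0 < ω :=
    ENNReal.toReal_pos (Metric.measure_ball_pos volume _ one_pos).ne' measure_ball_lt_top.ne
  refine ⟨ω * √c, by positivity, fun t ht => ?_⟩
  calc ω * √c * √t = ω * √(c * t) := by rw [Real.sqrt_mul hc.le]; ring
    _ ≤ ω * √(tK Q B t).det := by gcongr; exact hdet t ht

/-- If `max{Re λ : λ ∈ σ(B)} ≥ 0`, then `V(t) ≥ c₀√t` for `t ≥ 1` (Proposition 2.3(i)). -/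
theorem statement1 {N : ℕ} (hN : 1 ≤ N) (Q B : Matrix (Fin N) (Fin N) ℝ)
    (hQ : Q.PosSemidef) (hH : Hormander Q B)
    (hmax : ∃ μ ∈ spectrum ℂ (B.map (Complex.ofReal : ℝ → ℂ)), (0:ℝ) ≤ μ.re) :
    ∃ c₀ > (0:ℝ), ∀ t ≥ (1:ℝ), c₀ * Real.sqrt t ≤ volFun Q B t :=
  statement1_general Q B hQ hH hmax
end
end

section
/- Assume tr B ≥ 0 and let 1 ≤ p < ∞. Suppose f ∈ 𝔅_{σ,p} for some σ ∈ (0,1). Then lim_{s→0⁺} s·∫₀¹ t^{−sp/2−1} ∫_{ℝ^N}∫_{ℝ^N} p(X,Y,t)|f(Y) − f(X)|^p dY dX dt = 0. -/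
open MeasureTheory Filter Matrix Real
open scoped Topology ENNReal NNReal

noncomputable section

/-- The part of the seminorm with `t ∈ (0,1]` does not contribute to the limit
(Lemma 4.1). -/
theorem statement9 {N : ℕ} (hN : 1 ≤ N) (Q B : Matrix (Fin N) (Fin N) ℝ)
    (hQ : Q.PosSemidef) (hH : Hormander Q B) (htr : 0 ≤ B.trace)
    (p : ℝ) (hp : 1 ≤ p) (f : (Fin N → ℝ) → ℝ)
    (σ : ℝ) (hσ : σ ∈ Set.Ioo (0:ℝ) 1) (hf : MemBesov Q B σ p f) :
    Tendsto (fun s => s * (besovEnergyOn Q B s p f (Set.Ioc 0 1)).toReal)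
      (𝓝[>] 0) (𝓝 0) := by
  obtain ⟨hσ0, hσ1⟩ := hσ
  -- the key bound: for 0 < s ≤ σ, the energy on (0,1] is bounded by the σ-energy
  have key : ∀ s ∈ Set.Ioo (0:ℝ) σ,
      besovEnergyOn Q B s p f (Set.Ioc 0 1) ≤ besovEnergy Q B σ p f := by
    intro s hs
    have h1 : besovEnergyOn Q B s p f (Set.Ioc 0 1)
        ≤ besovEnergyOn Q B σ p f (Set.Ioc 0 1) := by
      unfold besovEnergyOn
      apply setLIntegral_mono' measurableSet_Ioc
      intro t ht
      apply lintegral_mono; intro X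
      apply lintegral_mono; intro Y
      dsimp only
      rw [mul_assoc, mul_assoc]
      set g := hormKernel Q B X Y t * |f Y - f X| ^ p with hg
      rcases le_or_gt 0 g with hg0 | hg0
      · apply ENNReal.ofReal_le_ofReal
        apply mul_le_mul_of_nonneg_right _ hg0
        apply Real.rpow_le_rpow_of_exponent_ge ht.1 ht.2
        have : s * p ≤ σ * p := by
          apply mul_le_mul_of_nonneg_right hs.2.le (le_trans zero_le_one hp)
        linarith
      · have ha : t ^ (-(s * p) / 2 - 1) * g ≤ 0 :=
          mul_nonpos_of_nonneg_of_nonpos (Real.rpow_nonneg ht.1.le _) hg0.le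
        rw [ENNReal.ofReal_eq_zero.mpr ha]
        exact zero_le
    have h2 : besovEnergyOn Q B σ p f (Set.Ioc 0 1) ≤ besovEnergy Q B σ p f := by
      unfold besovEnergy besovEnergyOn
      exact lintegral_mono_set Set.Ioc_subset_Ioi_self
    exact h1.trans h2
  set C : ℝ := (besovEnergy Q B σ p f).toReal with hC
  have hfin : besovEnergy Q B σ p f ≠ ⊤ := hf.2.ne
  have hbound : ∀ s ∈ Set.Ioo (0:ℝ) σ,
      (besovEnergyOn Q B s p f (Set.Ioc 0 1)).toReal ≤ C := by
    intro s hs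
    exact ENNReal.toReal_mono hfin (key s hs)
  have hCtend : Tendsto (fun s : ℝ => s * C) (𝓝[>] 0) (𝓝 0) := by
    have : Tendsto (fun s : ℝ => s * C) (𝓝 0) (𝓝 (0 * C)) :=
      (continuous_id.mul continuous_const).tendsto 0
    rw [zero_mul] at this
    exact this.mono_left nhdsWithin_le_nhds
  apply squeeze_zero'
  · filter_upwards [self_mem_nhdsWithin] with s hs
    exact mul_nonneg (le_of_lt hs) ENNReal.toReal_nonneg
  · filter_upwards [self_mem_nhdsWithin, Ioo_mem_nhdsGT hσ0] with s hs hsσ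
    exact mul_le_mul_of_nonneg_left (hbound s hsσ) (le_of_lt hs)
  · exact hCtend
end
end
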